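/- arXiv:2512.15356 — 2 statements merged into one kernel-verified Lean document; each statement's English description precedes it below -/
import Mathlib

section
/- Let H be a simple t-uniform hypergraph, U a subset of its vertices, and suppose the degrees of vertices in U are not almost regular. Let d̄ be the average degree over U. Then there exist vertices v_i, v_j ∈ U with d(v_i) > ⌈d̄⌉ or d(v_j) < ⌊d̄⌋, and an edge e with v_i ∈ e, v_j ∉ e, and (e \ {v_i}) ∪ {v_j} not an edge of H, so that replacing e by (e \ {v_i}) ∪ {v_j} strictly decreases Σ_{v∈U} min{|d(v) − ⌊d̄⌋|, |d(v) − ⌈d̄⌉|} while preserving all degrees outside U and the degree sum over U. -/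
/-- Degree of a vertex in a hypergraph given as a finite set of edges. -/
def hdeg {V : Type*} [DecidableEq V] (H : Finset (Finset V)) (v : V) : ℕ :=
  (H.filter (fun e => v ∈ e)).card

/-- The potential `f(G) = ∑_{v ∈ U} min(|d_G(v) - ⌊d̄⌋|, |d_G(v) - ⌈d̄⌉|)`. -/
def pot {V : Type*} [DecidableEq V] (U : Finset V) (dbar : ℚ)
    (G : Finset (Finset V)) : ℤ :=
  ∑ v ∈ U, min |(hdeg G v : ℤ) - ⌊dbar⌋| |(hdeg G v : ℤ) - ⌈dbar⌉|

lemma hdeg_insert {V : Type*} [DecidableEq V] (H : Finset (Finset V)) (a : Finset V)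
    (ha : a ∉ H) (v : V) :
    hdeg (insert a H) v = hdeg H v + if v ∈ a then 1 else 0 := by
  unfold hdeg
  rw [Finset.filter_insert]
  split_ifs with h
  · rw [Finset.card_insert_of_notMem (fun hmem => ha (Finset.mem_filter.1 hmem).1)]
  · simp

lemma hdeg_erase {V : Type*} [DecidableEq V] (H : Finset (Finset V)) (a : Finset V)
    (ha : a ∈ H) (v : V) :
    hdeg H v = hdeg (H.erase a) v + if v ∈ a then 1 else 0 := by
  unfold hdeg
  rw [Finset.filter_erase]
  split_ifs with h
  · have hm : a ∈ H.filter (fun e => v ∈ e) := Finset.mem_filter.2 ⟨ha, h⟩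
    rw [Finset.card_erase_of_mem hm]
    have : 0 < (H.filter (fun e => v ∈ e)).card := Finset.card_pos.2 ⟨a, hm⟩
    omega
  · have hnm : a ∉ H.filter (fun e => v ∈ e) := fun hmem => h (Finset.mem_filter.1 hmem).2
    rw [Finset.erase_eq_of_notMem hnm, add_zero]

lemma min_abs_eq_max (fl ce d : ℤ) (h1 : fl ≤ ce) (h2 : ce ≤ fl + 1) :
    min |d - fl| |d - ce| = max (d - ce) (fl - d) := by
  rcases le_or_gt d fl with h | h
  · rw [abs_of_nonpos (by omega), abs_of_nonpos (by omega),
      min_eq_left (by omega), max_eq_right (by omega)]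
    omega
  · rw [abs_of_nonneg (by omega), abs_of_nonneg (by omega),
      min_eq_right (by omega), max_eq_left (by omega)]

/-- If the degrees on `U` are not almost regular, there is a hinge-flip that strictly
decreases the potential while preserving degrees outside `U` and the degree sum over `U`. -/
theorem hinge_flip_decreases_potential (n t : ℕ) (H : Finset (Finset (Fin n)))
    (hH : ∀ e ∈ H, e.card = t) (U : Finset (Fin n)) (hU : U.Nonempty)
    (hnar : ¬ ∃ k : ℕ, ∀ v ∈ U, hdeg H v = k ∨ hdeg H v = k + 1) :
    ∃ vi ∈ U, ∃ vj ∈ U, ∃ e ∈ H,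
      ((hdeg H vi : ℤ) > ⌈((∑ v ∈ U, (hdeg H v : ℚ)) / U.card : ℚ)⌉ ∨
        (hdeg H vj : ℤ) < ⌊((∑ v ∈ U, (hdeg H v : ℚ)) / U.card : ℚ)⌋) ∧
      vi ∈ e ∧ vj ∉ e ∧ insert vj (e.erase vi) ∉ H ∧
      pot U ((∑ v ∈ U, (hdeg H v : ℚ)) / U.card)
          (insert (insert vj (e.erase vi)) (H.erase e)) <
        pot U ((∑ v ∈ U, (hdeg H v : ℚ)) / U.card) H ∧
      (∀ v ∉ U, hdeg (insert (insert vj (e.erase vi)) (H.erase e)) v = hdeg H v) ∧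
      (∑ v ∈ U, hdeg (insert (insert vj (e.erase vi)) (H.erase e)) v
          = ∑ v ∈ U, hdeg H v) := by
  classical
  set db : ℚ := (∑ v ∈ U, (hdeg H v : ℚ)) / U.card with hdb
  obtain ⟨vi, hviU, hmax⟩ := U.exists_max_image (fun v => hdeg H v) hU
  obtain ⟨vj, hvjU, hmin⟩ := U.exists_min_image (fun v => hdeg H v) hU
  have hgap : hdeg H vj + 2 ≤ hdeg H vi := by
    by_contra hc
    push_neg at hc
    exact hnar ⟨hdeg H vj, fun v hv => by
      have h1 := hmin v hv; have h2 := hmax v hv; omega⟩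
  have hij : vi ≠ vj := fun h => by rw [h] at hgap; omega
  have hcard : 0 < (U.card : ℚ) := by exact_mod_cast hU.card_pos
  have hsum1 : U.card * hdeg H vj < ∑ v ∈ U, hdeg H v := by
    have h := Finset.sum_lt_sum (f := fun _ : Fin n => hdeg H vj)
      (g := fun v => hdeg H v) (fun v hv => hmin v hv) ⟨vi, hviU, show hdeg H vj < hdeg H vi by omega⟩
    simpa [Finset.sum_const, mul_comm] using h
  have hsum2 : ∑ v ∈ U, hdeg H v < U.card * hdeg H vi := by
    have h := Finset.sum_lt_sum (f := fun v => hdeg H v)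
      (g := fun _ : Fin n => hdeg H vi) (fun v hv => hmax v hv) ⟨vj, hvjU, show hdeg H vj < hdeg H vi by omega⟩
    simpa [Finset.sum_const, mul_comm] using h
  have hq1 : (hdeg H vj : ℚ) < db := by
    rw [hdb, lt_div_iff₀ hcard]
    have : ((U.card * hdeg H vj : ℕ) : ℚ) < ((∑ v ∈ U, hdeg H v : ℕ) : ℚ) := by
      exact_mod_cast hsum1
    push_cast at this ⊢
    linarith
  have hq2 : db < (hdeg H vi : ℚ) := by
    rw [hdb, div_lt_iff₀ hcard]
    have : ((∑ v ∈ U, hdeg H v : ℕ) : ℚ) < ((U.card * hdeg H vi : ℕ) : ℚ) := by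
      exact_mod_cast hsum2
    push_cast at this ⊢
    linarith
  have hfl1 : (hdeg H vj : ℤ) ≤ ⌊db⌋ := Int.le_floor.2 (by push_cast; exact hq1.le)
  have hfl2 : ⌊db⌋ < (hdeg H vi : ℤ) := Int.floor_lt.2 (by push_cast; exact hq2)
  have hce1 : (hdeg H vj : ℤ) < ⌈db⌉ := Int.lt_ceil.2 (by push_cast; exact hq1)
  have hce2 : ⌈db⌉ ≤ (hdeg H vi : ℤ) := Int.ceil_le.2 (by push_cast; exact hq2.le)
  have hfc : ⌈db⌉ ≤ ⌊db⌋ + 1 := Int.ceil_le_floor_add_one db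
  have hfc2 : ⌊db⌋ ≤ ⌈db⌉ := Int.floor_le_ceil db
  -- find the edge to flip
  have hedge : ∃ e, (e ∈ H ∧ vi ∈ e ∧ vj ∉ e) ∧ insert vj (e.erase vi) ∉ H := by
    by_contra hc
    push_neg at hc
    have hsub : ∀ e ∈ H.filter (fun e => vi ∈ e ∧ vj ∉ e),
        insert vj (e.erase vi) ∈ H.filter (fun e => vj ∈ e ∧ vi ∉ e) := by
      intro e he
      obtain ⟨heH, hvie, hvje⟩ := Finset.mem_filter.1 he
      refine Finset.mem_filter.2 ⟨hc e ⟨heH, hvie, hvje⟩, Finset.mem_insert_self _ _, ?_⟩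
      simp only [Finset.mem_insert, Finset.mem_erase]
      push_neg
      exact ⟨hij, fun h => absurd rfl h⟩
    have hinj : Set.InjOn (fun e : Finset (Fin n) => insert vj (e.erase vi))
        ↑(H.filter (fun e => vi ∈ e ∧ vj ∉ e)) := by
      intro e1 h1 e2 h2 heq
      simp only [Finset.coe_filter, Set.mem_setOf_eq] at h1 h2
      have key : ∀ e : Finset (Fin n), vi ∈ e → vj ∉ e →
          insert vi ((insert vj (e.erase vi)).erase vj) = e := by
        intro e hi hj
        rw [Finset.erase_insert (fun hm => hj (Finset.mem_of_mem_erase hm)),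
          Finset.insert_erase hi]
      have heq' : insert vj (e1.erase vi) = insert vj (e2.erase vi) := heq
      have := key e1 h1.2.1 h1.2.2
      rw [heq', key e2 h2.2.1 h2.2.2] at this
      exact this.symm
    have hle := Finset.card_le_card_of_injOn _ hsub hinj
    have split_i := Finset.card_filter_add_card_filter_not
      (s := H.filter (fun e => vi ∈ e)) (p := fun e => vj ∈ e)
    have split_j := Finset.card_filter_add_card_filter_not
      (s := H.filter (fun e => vj ∈ e)) (p := fun e => vi ∈ e)
    rw [Finset.filter_filter, Finset.filter_filter] at split_i split_j
    have e1 : H.filter (fun e => vi ∈ e ∧ ¬ vj ∈ e) = H.filter (fun e => vi ∈ e ∧ vj ∉ e) := rfl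
    have e2 : H.filter (fun e => vj ∈ e ∧ ¬ vi ∈ e) = H.filter (fun e => vj ∈ e ∧ vi ∉ e) := rfl
    have e3 : H.filter (fun e => vi ∈ e ∧ vj ∈ e) = H.filter (fun e => vj ∈ e ∧ vi ∈ e) := by
      apply Finset.filter_congr; intro x _; constructor <;> exact fun h => ⟨h.2, h.1⟩
    rw [e1, e3] at split_i
    rw [e2] at split_j
    have hdi : hdeg H vi = (H.filter (fun e => vi ∈ e)).card := rfl
    have hdj : hdeg H vj = (H.filter (fun e => vj ∈ e)).card := rfl
    omega
  obtain ⟨e, ⟨heH, hvie, hvje⟩, hnew⟩ := hedge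
  set e' := insert vj (e.erase vi) with he'def
  set H' := insert e' (H.erase e) with hH'def
  have he'not : e' ∉ H.erase e := fun h => hnew (Finset.mem_of_mem_erase h)
  have hvie' : vi ∉ e' := by
    simp only [he'def, Finset.mem_insert, Finset.mem_erase]
    push_neg
    exact ⟨hij, fun h => absurd rfl h⟩
  have hvje' : vj ∈ e' := Finset.mem_insert_self _ _
  have hdegH' : ∀ v, hdeg H' v = hdeg (H.erase e) v + if v ∈ e' then 1 else 0 :=
    fun v => hdeg_insert _ _ he'not v
  have hdegH : ∀ v, hdeg H v = hdeg (H.erase e) v + if v ∈ e then 1 else 0 :=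
    fun v => hdeg_erase _ _ heH v
  have hother : ∀ v, v ≠ vi → v ≠ vj → hdeg H' v = hdeg H v := by
    intro v h1 h2
    rw [hdegH' v, hdegH v]
    have hiff : v ∈ e' ↔ v ∈ e := by
      simp [he'def, Finset.mem_insert, Finset.mem_erase, h1, h2]
    congr 1
    simp [hiff]
  have hvi' : hdeg H' vi + 1 = hdeg H vi := by
    rw [hdegH' vi, hdegH vi]; simp [hvie, hvie']
  have hvj' : hdeg H' vj = hdeg H vj + 1 := by
    rw [hdegH' vj, hdegH vj]; simp [hvje, hvje']
  have hvjU' : vj ∈ U.erase vi := Finset.mem_erase.2 ⟨Ne.symm hij, hvjU⟩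
  refine ⟨vi, hviU, vj, hvjU, e, heH, ?_, hvie, hvje, hnew, ?_, ?_, ?_⟩
  · -- the disjunction
    omega
  · -- potential decreases
    show pot U db H' < pot U db H
    unfold pot
    rw [← Finset.add_sum_erase U _ hviU, ← Finset.add_sum_erase (U.erase vi) _ hvjU',
      ← Finset.add_sum_erase U
        (fun v => min |(hdeg H v : ℤ) - ⌊db⌋| |(hdeg H v : ℤ) - ⌈db⌉|) hviU,
      ← Finset.add_sum_erase (U.erase vi)
        (fun v => min |(hdeg H v : ℤ) - ⌊db⌋| |(hdeg H v : ℤ) - ⌈db⌉|) hvjU']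
    have hrest : ∑ v ∈ (U.erase vi).erase vj,
        min |(hdeg H' v : ℤ) - ⌊db⌋| |(hdeg H' v : ℤ) - ⌈db⌉|
        = ∑ v ∈ (U.erase vi).erase vj,
        min |(hdeg H v : ℤ) - ⌊db⌋| |(hdeg H v : ℤ) - ⌈db⌉| := by
      refine Finset.sum_congr rfl (fun v hv => ?_)
      simp only [Finset.mem_erase] at hv
      rw [hother v hv.2.1 hv.1]
    rw [hrest]
    have hdi' : (hdeg H' vi : ℤ) = (hdeg H vi : ℤ) - 1 := by
      have := hvi'; push_cast [← this]; ring
    have hdj' : (hdeg H' vj : ℤ) = (hdeg H vj : ℤ) + 1 := by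
      exact_mod_cast congrArg (Nat.cast : ℕ → ℤ) hvj'
    rw [hdi', hdj', min_abs_eq_max _ _ _ hfc2 hfc, min_abs_eq_max _ _ _ hfc2 hfc,
      min_abs_eq_max _ _ _ hfc2 hfc, min_abs_eq_max _ _ _ hfc2 hfc]
    have hg := hgap
    rcases max_cases ((hdeg H vi : ℤ) - 1 - ⌈db⌉) (⌊db⌋ - ((hdeg H vi : ℤ) - 1)) with ⟨ha, _⟩ | ⟨ha, _⟩ <;>
      rcases max_cases ((hdeg H vj : ℤ) + 1 - ⌈db⌉) (⌊db⌋ - ((hdeg H vj : ℤ) + 1)) with ⟨hb, _⟩ | ⟨hb, _⟩ <;>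
      rcases max_cases ((hdeg H vi : ℤ) - ⌈db⌉) (⌊db⌋ - (hdeg H vi : ℤ)) with ⟨hc, _⟩ | ⟨hc, _⟩ <;>
      rcases max_cases ((hdeg H vj : ℤ) - ⌈db⌉) (⌊db⌋ - (hdeg H vj : ℤ)) with ⟨hd, _⟩ | ⟨hd, _⟩ <;>
      rw [ha, hb, hc, hd] <;> omega
  · -- degrees outside U preserved
    show ∀ v ∉ U, hdeg H' v = hdeg H v
    intro v hv
    exact hother v (fun h => hv (h ▸ hviU)) (fun h => hv (h ▸ hvjU))
  · -- degree sum over U preserved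
    show ∑ v ∈ U, hdeg H' v = ∑ v ∈ U, hdeg H v
    rw [← Finset.add_sum_erase U _ hviU, ← Finset.add_sum_erase (U.erase vi) _ hvjU',
      ← Finset.add_sum_erase U (fun v => hdeg H v) hviU,
      ← Finset.add_sum_erase (U.erase vi) (fun v => hdeg H v) hvjU']
    have hrest : ∑ v ∈ (U.erase vi).erase vj, hdeg H' v
        = ∑ v ∈ (U.erase vi).erase vj, hdeg H v := by
      refine Finset.sum_congr rfl (fun v hv => ?_)
      simp only [Finset.mem_erase] at hv
      exact hother v hv.2.1 hv.1
    rw [hrest]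
    omega
end

section
/- Let t ≥ 3 and let n, Δ, δ be positive integers with δ ≤ Δ. Suppose S is a set of n vertices partitioned into V_L and V_S. If C(|V_L|−1, t−1) > Δ and we can attach, for each vertex of V_S, δ edges each consisting of that vertex together with t−1 vertices of V_L so that the added degrees on V_L are almost regular and each at most Δ, then, provided t divides |V_L|·Δ + |V_S|·δ, appending an almost regular t-uniform hypergraph on V_L realizes the degree sequence with |V_L| degrees equal to Δ and |V_S| degrees equal to δ. -/
section helpers
variable {V : Type*} [DecidableEq V]
lemma hdeg_union (H H' : Finset (Finset V)) (h : Disjoint H H') (v : V) :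
    hdeg (H ∪ H') v = hdeg H v + hdeg H' v := by
  unfold hdeg
  rw [Finset.filter_union, Finset.card_union_of_disjoint
    (h.mono (Finset.filter_subset _ _) (Finset.filter_subset _ _))]
lemma hdeg_zero (H : Finset (Finset V)) (v : V) (h : ∀ e ∈ H, v ∉ e) :
    hdeg H v = 0 := by
  unfold hdeg
  rw [Finset.filter_false_of_mem h, Finset.card_empty]
lemma sum_hdeg (H : Finset (Finset V)) (U : Finset V) (hE : ∀ e ∈ H, e ⊆ U) :
    ∑ v ∈ U, hdeg H v = ∑ e ∈ H, e.card := by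
  unfold hdeg
  simp_rw [Finset.card_filter]
  rw [Finset.sum_comm]
  refine Finset.sum_congr rfl fun e he => ?_
  rw [← Finset.card_filter, Finset.filter_mem_eq_inter, Finset.inter_eq_right.mpr (hE e he)]
lemma hdeg_image_insert (H : Finset (Finset V)) (v : V) (hv : ∀ e ∈ H, v ∉ e) (u : V) :
    hdeg (H.image (insert v)) u = if u = v then H.card else hdeg H u := by
  have hinj : Set.InjOn (insert v) (H : Set (Finset V)) := by
    intro e1 h1 e2 h2 hee
    have : (insert v e1).erase v = (insert v e2).erase v := by rw [hee]
    rwa [Finset.erase_insert (hv e1 h1), Finset.erase_insert (hv e2 h2)] at this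
  unfold hdeg
  split_ifs with huv
  · have hall : ∀ e ∈ H.image (insert v), u ∈ e := by
      intro e he
      simp only [Finset.mem_image] at he
      obtain ⟨e', _, rfl⟩ := he
      rw [huv]
      exact Finset.mem_insert_self _ _
    rw [Finset.filter_true_of_mem hall]
    exact Finset.card_image_of_injOn hinj
  · rw [Finset.filter_image]
    have : (H.filter fun e => u ∈ insert v e) = H.filter fun e => u ∈ e := by
      refine Finset.filter_congr fun e _ => ?_
      simp [Finset.mem_insert, huv]
    rw [this]
    exact Finset.card_image_of_injOn (hinj.mono (by intro x hx; exact (Finset.mem_filter.mp hx).1))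
end helpers

lemma core_aux {V : Type*} [DecidableEq V] :
    ∀ (n : ℕ) (t : ℕ) (U : Finset V) (d : V → ℕ) (a : ℕ),
      t + U.card ≤ n → 1 ≤ t →
      (∀ v ∈ U, d v = a ∨ d v = a + 1) →
      (∀ v ∈ U, d v ≤ (U.card - 1).choose (t - 1)) →
      t ∣ ∑ v ∈ U, d v →
      ∃ H : Finset (Finset V),
        (∀ e ∈ H, e.card = t ∧ e ⊆ U) ∧ (∀ v ∈ U, hdeg H v = d v) := by
  intro n
  induction n with
  | zero => intro t U d a hn ht _ _ _; omega
  | succ n ih =>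
    intro t U d a hn ht hwin hbd hdvd
    by_cases h0 : ∀ v ∈ U, d v = 0
    · refine ⟨∅, by simp, fun v hv => ?_⟩
      rw [hdeg_zero _ _ (by simp), h0 v hv]
    push_neg at h0
    obtain ⟨v₀, hv₀U, hv₀⟩ := h0
    have hU1 : 1 ≤ U.card := Finset.card_pos.mpr ⟨v₀, hv₀U⟩
    have hmt : t ≤ U.card := by
      by_contra h
      push_neg at h
      have h1 := Nat.choose_eq_zero_of_lt (show U.card - 1 < t - 1 by omega)
      have h2 := hbd v₀ hv₀U
      omega
    rcases eq_or_lt_of_le ht with ht1 | ht2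
    · -- t = 1
      refine ⟨(U.filter fun u => d u = 1).image (fun u => ({u} : Finset V)), ?_, ?_⟩
      · intro e he
        simp only [Finset.mem_image, Finset.mem_filter] at he
        obtain ⟨u, ⟨huU, _⟩, rfl⟩ := he
        constructor
        · simp [← ht1]
        · intro x hx; simp only [Finset.mem_singleton] at hx; subst hx; exact huU
      · intro w hw
        have hb := hbd w hw
        rw [← ht1] at hb
        simp only [Nat.sub_self, Nat.choose_zero_right] at hb
        unfold hdeg
        rw [Finset.filter_image]
        have : ((U.filter fun u => d u = 1).filter fun u => w ∈ ({u} : Finset V))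
            = (U.filter fun u => d u = 1).filter fun u => u = w := by
          refine Finset.filter_congr fun u _ => ?_
          simp [eq_comm, Finset.mem_singleton]
        rw [this, Finset.filter_eq']
        by_cases hdw : d w = 1
        · rw [if_pos (Finset.mem_filter.mpr ⟨hw, hdw⟩)]
          simp [hdw]
        · rw [if_neg (by simp only [Finset.mem_filter]; tauto)]
          simp
          omega
    rcases eq_or_lt_of_le hmt with hmt1 | hmt2
    · -- U.card = t : base case
      have hb1 : ∀ u ∈ U, d u ≤ 1 := by
        intro u hu
        have := hbd u hu
        rw [← hmt1, Nat.choose_self] at this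
        exact this
      have hsle : ∑ u ∈ U, d u ≤ U.card := by
        calc ∑ u ∈ U, d u ≤ ∑ _u ∈ U, 1 := Finset.sum_le_sum hb1
        _ = U.card := by simp
      have hsge : 1 ≤ ∑ u ∈ U, d u :=
        le_trans (by omega) (Finset.single_le_sum (f := d) (fun i _ => Nat.zero_le _) hv₀U)
      obtain ⟨q, hq⟩ := hdvd
      have hqs : ∑ u ∈ U, d u = t := by
        rcases Nat.lt_or_ge q 1 with h | h
        · interval_cases q <;> omega
        · have : t * 1 ≤ t * q := Nat.mul_le_mul le_rfl h
          omega
      have hall1 : ∀ u ∈ U, d u = 1 := by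
        intro u hu
        by_contra hne
        have hdu0 : d u = 0 := by have := hb1 u hu; omega
        have : ∑ x ∈ U.erase u, d x + d u = ∑ x ∈ U, d x := Finset.sum_erase_add _ _ hu
        have hle : ∑ x ∈ U.erase u, d x ≤ (U.erase u).card :=
          le_trans (Finset.sum_le_sum (fun i hi => hb1 i (Finset.mem_of_mem_erase hi)))
            (by simp)
        rw [Finset.card_erase_of_mem hu] at hle
        omega
      refine ⟨{U}, ?_, ?_⟩
      · intro e he
        simp only [Finset.mem_singleton] at he
        subst he
        exact ⟨hmt1.symm, le_rfl⟩
      · intro w hw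
        unfold hdeg
        rw [Finset.filter_true_of_mem (by intro e he; simp only [Finset.mem_singleton] at he; subst he; exact hw)]
        rw [Finset.card_singleton, hall1 w hw]
    -- main recursive case : t ≥ 2, U.card ≥ t + 1
    obtain ⟨m', hm'⟩ : ∃ m', U.card = m' + 1 := ⟨U.card - 1, by omega⟩
    have hm't : t ≤ m' := by omega
    -- choose v
    obtain ⟨v, hvU, hN1, hNmax, hvor⟩ :
        ∃ v ∈ U, 1 ≤ d v ∧ (∀ u ∈ U, d u ≤ d v) ∧ (d v = a + 1 ∨ ∀ u ∈ U, d u = a) := by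
      by_cases hex : ∃ u ∈ U, d u = a + 1
      · obtain ⟨v, hv, hva⟩ := hex
        exact ⟨v, hv, by omega, fun u hu => by rcases hwin u hu with h | h <;> omega, Or.inl hva⟩
      · push_neg at hex
        have hall : ∀ u ∈ U, d u = a := by
          intro u hu
          rcases hwin u hu with h | h
          · exact h
          · exact absurd h (hex u hu)
        exact ⟨v₀, hv₀U, by have := hall v₀ hv₀U; omega,
          fun u hu => by rw [hall u hu, hall v₀ hv₀U], Or.inr hall⟩
    set N := d v with hNdef
    have haN : a ≤ N := by rcases hwin v hvU with h | h <;> omega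
    have hNa : N ≤ a + 1 := by rcases hwin v hvU with h | h <;> omega
    set U' := U.erase v with hU'def
    have hU'card : U'.card = m' := by rw [hU'def, Finset.card_erase_of_mem hvU]; omega
    have hvU' : v ∉ U' := Finset.notMem_erase _ _
    have hU'sub : U' ⊆ U := Finset.erase_subset _ _
    set T := (t - 1) * N with hTdef
    set c := T / m' with hcdef
    set r := T % m' with hrdef
    have hdm : m' * c + r = T := Nat.div_add_mod T m'
    have hrm : r < m' := Nat.mod_lt _ (by omega)
    set C0 := m'.choose (t - 1) with hC0def
    have hNC : N ≤ C0 := by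
      have := hbd v hvU
      rw [hm'] at this
      simpa using this
    set C1 := (m' - 1).choose (t - 1) with hC1def
    set C2 := (m' - 1).choose (t - 2) with hC2def
    have e1 : m' - 1 + 1 = m' := by omega
    have e2 : t - 2 + 1 = t - 1 := by omega
    have IdA : m' * C2 = C0 * (t - 1) := by
      have h := Nat.add_one_mul_choose_eq (m' - 1) (t - 2)
      rw [e1, e2] at h
      exact h
    have IdB : C1 * m' = C0 * (m' - (t - 1)) := by
      have h := Nat.choose_mul_succ_eq (m' - 1) (t - 1)
      rw [e1] at h
      exact h
    have hTle : T ≤ m' * C2 := by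
      have : (t - 1) * N ≤ (t - 1) * C0 := Nat.mul_le_mul le_rfl hNC
      rw [IdA]
      calc T = (t - 1) * N := hTdef
      _ ≤ (t - 1) * C0 := this
      _ = C0 * (t - 1) := Nat.mul_comm _ _
    have hca : c ≤ a := by
      by_contra h
      push_neg at h
      have h1 : m' * (a + 1) ≤ m' * c := Nat.mul_le_mul le_rfl h
      have h3 : T ≤ (t - 1) * (a + 1) := Nat.mul_le_mul le_rfl hNa
      have h4 : (t - 1) * (a + 1) < m' * (a + 1) :=
        Nat.mul_lt_mul_of_lt_of_le (by omega) le_rfl (by omega)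
      omega
    set A' := U'.filter (fun u => d u = a + 1) with hA'def
    set s := A'.card with hsdef
    -- key fact
    have hkey2 : s < r → c + 1 ≤ a := by
      intro hsr
      by_contra hcon
      have hc : c = a := by omega
      rcases hvor with hva | hall
      · -- sum over U
        have hNa1 : N = a + 1 := hva
        have hptw : ∀ u ∈ U, d u = a + (if d u = a + 1 then 1 else 0) := by
          intro u hu
          rcases hwin u hu with h | h
          · rw [h, if_neg (by omega)]; rfl
          · rw [h, if_pos rfl]
        have hsum : ∑ u ∈ U, d u = U.card * a + (U.filter fun u => d u = a + 1).card := by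
          rw [Finset.sum_congr rfl hptw, Finset.sum_add_distrib, Finset.sum_const,
            smul_eq_mul, ← Finset.card_filter]
        have hAe : A' = (U.filter fun u => d u = a + 1).erase v := by
          rw [hA'def, hU'def, Finset.filter_erase]
        have hvF : v ∈ U.filter fun u => d u = a + 1 := Finset.mem_filter.mpr ⟨hvU, hva⟩
        have hcardf : (U.filter fun u => d u = a + 1).card = s + 1 := by
          rw [hsdef, hAe, Finset.card_erase_of_mem hvF]
          have : 1 ≤ (U.filter fun u => d u = a + 1).card := Finset.card_pos.mpr ⟨v, hvF⟩
          omega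
        obtain ⟨q, hq⟩ := hdvd
        have hsum' : ∑ u ∈ U, d u = m' * a + a + (s + 1) := by
          rw [hsum, hcardf, hm', Nat.add_mul, Nat.one_mul]
        have h2 : m' * c + r = (t - 1) * (a + 1) := by
          rw [hdm, hTdef, hNa1]
        have hmc : m' * c = m' * a := by rw [hc]
        have h3 : (t - 1) * (a + 1) + (a + 1) = t * (a + 1) := by
          have ht' : t - 1 + 1 = t := by omega
          calc (t - 1) * (a + 1) + (a + 1) = (t - 1 + 1) * (a + 1) := by rw [Nat.add_mul, Nat.one_mul]
          _ = t * (a + 1) := by rw [ht']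
        rcases le_or_gt q a with hqa | hqa
        · have h7 : t * q ≤ t * a := Nat.mul_le_mul le_rfl hqa
          have h8 : t * a ≤ m' * a := Nat.mul_le_mul hm't le_rfl
          omega
        · have h6 : t * (a + 1) ≤ t * q := Nat.mul_le_mul le_rfl hqa
          omega
      · -- all degrees equal a, N = a
        have hNa0 : N = a := hall v hvU
        have hs0 : s = 0 := by
          rw [hsdef, hA'def, Finset.card_eq_zero]
          rw [Finset.filter_eq_empty_iff]
          intro u hu
          have := hall u (hU'sub hu)
          omega
        have hr1 : 1 ≤ r := by omega
        have ha1 : 1 ≤ a := by omega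
        have h8 : (t - 1) * a < m' * a := Nat.mul_lt_mul_of_lt_of_le (by omega) le_rfl (by omega)
        have : m' * c + r = (t - 1) * a := by rw [hdm, hTdef, hNa0]
        rw [hc] at this
        omega
    -- construct R
    obtain ⟨R, hRsub, hRcard, hRal⟩ :
        ∃ R : Finset V, R ⊆ U' ∧ R.card = r ∧ ((r ≤ s ∧ R ⊆ A') ∨ (s < r ∧ A' ⊆ R)) := by
      rcases le_or_gt r s with h | h
      · obtain ⟨R, hR1, hR2⟩ := Finset.exists_subset_card_eq (s := A') (n := r) h
        exact ⟨R, hR1.trans (Finset.filter_subset _ _), hR2, Or.inl ⟨h, hR1⟩⟩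
      · obtain ⟨R, hR1, hR2, hR3⟩ := Finset.exists_subsuperset_card_eq
          (Finset.filter_subset _ _) (le_of_lt h) (by rw [hU'card]; omega)
        refine ⟨R, hR2, hR3, Or.inr ⟨h, hR1⟩⟩
    set cov := fun u => c + (if u ∈ R then 1 else 0) with hcovdef
    have hcovR : ∀ u ∈ R, cov u = c + 1 := fun u hu => by simp [hcovdef, hu]
    have hcovnR : ∀ u, u ∉ R → cov u = c := fun u hu => by simp [hcovdef, hu]
    have hcovsum : ∑ u ∈ U', cov u = T := by
      rw [hcovdef]
      rw [Finset.sum_add_distrib, Finset.sum_const, smul_eq_mul]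
      have : ∑ u ∈ U', (if u ∈ R then 1 else 0) = R.card := by
        rw [Finset.sum_ite_mem, Finset.inter_eq_right.mpr hRsub, Finset.card_eq_sum_ones]
      rw [this, hU'card, hRcard, hdm]
    have hmemA' : ∀ u ∈ U', (u ∈ A' ↔ d u = a + 1) := by
      intro u hu
      rw [hA'def, Finset.mem_filter]
      tauto
    have hdge : ∀ u ∈ U', a ≤ d u := by
      intro u hu
      rcases hwin u (hU'sub hu) with h | h <;> omega
    have hdle : ∀ u ∈ U', d u ≤ a + 1 := by
      intro u hu
      rcases hwin u (hU'sub hu) with h | h <;> omega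
    have hcov_le_d : ∀ u ∈ U', cov u ≤ d u := by
      intro u hu
      by_cases huR : u ∈ R
      · rw [hcovR u huR]
        rcases hRal with ⟨hrs, hRA⟩ | ⟨hsr, hAR⟩
        · have : d u = a + 1 := (hmemA' u hu).mp (hRA huR)
          omega
        · have := hkey2 hsr
          have := hdge u hu
          omega
      · rw [hcovnR u huR]
        have := hdge u hu
        omega
    -- residual window
    obtain ⟨a', hwin'⟩ : ∃ a', ∀ u ∈ U', (d u - cov u = a' ∨ d u - cov u = a' + 1) := by
      rcases hRal with ⟨hrs, hRA⟩ | ⟨hsr, hAR⟩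
      · refine ⟨a - c, fun u hu => ?_⟩
        by_cases huR : u ∈ R
        · have hd : d u = a + 1 := (hmemA' u hu).mp (hRA huR)
          rw [hcovR u huR, hd]
          left; omega
        · rw [hcovnR u huR]
          rcases hwin u (hU'sub hu) with h | h
          · rw [h]; left; omega
          · rw [h]; right; omega
      · have hc1 := hkey2 hsr
        refine ⟨a - c - 1, fun u hu => ?_⟩
        by_cases huR : u ∈ R
        · rw [hcovR u huR]
          by_cases huA : u ∈ A'
          · have hd : d u = a + 1 := (hmemA' u hu).mp huA
            rw [hd]; right; omega
          · have hd : d u = a := by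
              rcases hwin u (hU'sub hu) with h | h
              · exact h
              · exact absurd ((hmemA' u hu).mpr h) huA
            rw [hd]; left; omega
        · rw [hcovnR u huR]
          have hd : d u = a := by
            rcases hwin u (hU'sub hu) with h | h
            · exact h
            · exact absurd (hAR ((hmemA' u hu).mpr h)) huR
          rw [hd]; right; omega
    -- residual bound
    have hcN : c ≤ N := le_trans hca haN
    have hNcC1 : N - c ≤ C1 := by
      by_contra h
      push_neg at h
      have hsplit : m' * N = m' * c + m' * (N - c) := by
        rw [← Nat.mul_add, Nat.add_sub_cancel' hcN]
      have hsplit2 : m' * N = (m' - (t - 1)) * N + (t - 1) * N := by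
        rw [← Nat.add_mul, Nat.sub_add_cancel (by omega)]
      have hWN : (m' - (t - 1)) * N ≤ (m' - (t - 1)) * C0 := Nat.mul_le_mul le_rfl hNC
      have hcontra : m' * (C1 + 1) ≤ m' * (N - c) := Nat.mul_le_mul le_rfl (by omega)
      have hx1 : m' * (C1 + 1) = C1 * m' + m' := by ring
      have hx2 : (m' - (t - 1)) * C0 = C0 * (m' - (t - 1)) := by ring
      omega
    have hbd' : ∀ u ∈ U', d u - cov u ≤ (U'.card - 1).choose (t - 1) := by
      intro u hu
      rw [hU'card]
      have h1 : d u ≤ N := hNmax u (hU'sub hu)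
      have h2 : c ≤ cov u := by
        by_cases huR : u ∈ R
        · rw [hcovR u huR]; omega
        · rw [hcovnR u huR]
      omega
    -- residual sum divisibility
    have hEq1 : ∑ u ∈ U', d u + N = ∑ u ∈ U, d u := by
      rw [hNdef, hU'def]
      exact Finset.sum_erase_add _ _ hvU
    have hEq2 : ∑ u ∈ U', (d u - cov u) + T = ∑ u ∈ U', d u := by
      rw [← hcovsum, ← Finset.sum_add_distrib]
      refine Finset.sum_congr rfl fun u hu => ?_
      have := hcov_le_d u hu
      omega
    have htN : N + T = t * N := by
      have ht' : t - 1 + 1 = t := by omega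
      calc N + T = (t - 1 + 1) * N := by rw [Nat.add_mul, Nat.one_mul, hTdef]; ring
      _ = t * N := by rw [ht']
    have hdvd' : t ∣ ∑ u ∈ U', (d u - cov u) := by
      have heq : ∑ u ∈ U', (d u - cov u) = (∑ u ∈ U, d u) - t * N := by omega
      rw [heq]
      exact Nat.dvd_sub hdvd (Dvd.intro N rfl)
    -- cov window and bound
    have hcovwin : ∀ u ∈ U', cov u = c ∨ cov u = c + 1 := by
      intro u _
      by_cases huR : u ∈ R
      · right; exact hcovR u huR
      · left; exact hcovnR u huR
    have hcovbd : ∀ u ∈ U', cov u ≤ (U'.card - 1).choose (t - 1 - 1) := by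
      intro u hu
      rw [hU'card]
      have e3 : t - 1 - 1 = t - 2 := by omega
      rw [e3]
      by_cases huR : u ∈ R
      · rw [hcovR u huR]
        have hr1 : 1 ≤ r := by
          have : R.Nonempty := ⟨u, huR⟩
          have := Finset.card_pos.mpr this
          omega
        have : m' * c < m' * C2 := by omega
        have := Nat.lt_of_mul_lt_mul_left this
        omega
      · rw [hcovnR u huR]
        have : m' * c ≤ m' * C2 := by omega
        exact Nat.le_of_mul_le_mul_left this (by omega)
    have hcovdvd : (t - 1) ∣ ∑ u ∈ U', cov u := by
      rw [hcovsum, hTdef]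
      exact Dvd.intro N rfl
    -- recursive calls
    obtain ⟨H₁, hH₁e, hH₁d⟩ := ih (t - 1) U' cov c (by omega) (by omega) hcovwin hcovbd hcovdvd
    obtain ⟨H₂, hH₂e, hH₂d⟩ := ih t U' (fun u => d u - cov u) a' (by omega) ht hwin' hbd' hdvd'
    -- H₁ card = N
    have hH₁card : H₁.card = N := by
      have hsum1 : ∑ u ∈ U', hdeg H₁ u = ∑ e ∈ H₁, e.card :=
        sum_hdeg H₁ U' (fun e he => (hH₁e e he).2)
      have hsum2 : ∑ e ∈ H₁, e.card = H₁.card * (t - 1) := by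
        rw [Finset.sum_congr rfl (fun e he => (hH₁e e he).1), Finset.sum_const, smul_eq_mul]
      have hsum3 : ∑ u ∈ U', hdeg H₁ u = (t - 1) * N := by
        rw [Finset.sum_congr rfl hH₁d, hcovsum, hTdef]
      have : (t - 1) * H₁.card = (t - 1) * N := by
        rw [← hsum3, hsum1, hsum2]; ring
      exact Nat.eq_of_mul_eq_mul_left (by omega) this
    have hH₁v : ∀ e ∈ H₁, v ∉ e := fun e he hv => hvU' ((hH₁e e he).2 hv)
    have hH₂v : ∀ e ∈ H₂, v ∉ e := fun e he hv => hvU' ((hH₂e e he).2 hv)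
    set HL := H₁.image (insert v) with hHLdef
    have hHLdeg : ∀ u, hdeg HL u = if u = v then N else hdeg H₁ u := by
      intro u
      rw [hHLdef, hdeg_image_insert H₁ v hH₁v u, hH₁card]
    have hdisj : Disjoint HL H₂ := by
      rw [Finset.disjoint_left]
      intro e heL heH₂
      simp only [hHLdef, Finset.mem_image] at heL
      obtain ⟨e', _, rfl⟩ := heL
      exact hH₂v _ heH₂ (Finset.mem_insert_self _ _)
    refine ⟨HL ∪ H₂, ?_, ?_⟩
    · intro e he
      rcases Finset.mem_union.mp he with h | h
      · simp only [hHLdef, Finset.mem_image] at h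
        obtain ⟨e', he', rfl⟩ := h
        constructor
        · rw [Finset.card_insert_of_notMem (hH₁v e' he'), (hH₁e e' he').1]
          omega
        · exact Finset.insert_subset hvU ((hH₁e e' he').2.trans hU'sub)
      · exact ⟨(hH₂e e h).1, (hH₂e e h).2.trans hU'sub⟩
    · intro u hu
      rw [hdeg_union _ _ hdisj, hHLdeg]
      by_cases huv : u = v
      · rw [if_pos huv, huv, hdeg_zero H₂ v hH₂v]; omega
      · have huU' : u ∈ U' := Finset.mem_erase.mpr ⟨huv, hu⟩
        rw [if_neg huv, hH₁d u huU', hH₂d u huU']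
        have := hcov_le_d u huU'
        omega

/-- Case (iii) construction pattern: given a partition `V = V_L ∪ V_S` with
`C(|V_L|−1, t−1) > Δ`, a hypergraph `H1` attaching to each vertex of `V_S` exactly `δ`
edges, each with `t−1` vertices of `V_L`, whose added degrees on `V_L` are almost
regular and at most `Δ`, can be completed by an almost regular hypergraph inside `V_L`
to a realization of the sequence with `|V_L|` degrees `Δ` and `|V_S|` degrees `δ`,
provided `t ∣ |V_L|·Δ + |V_S|·δ`. -/
theorem complete_by_almost_regular (t δ Δ : ℕ) (ht : 3 ≤ t)
    (hδpos : 0 < δ) (hδΔ : δ ≤ Δ)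
    {V : Type*} [Fintype V] [DecidableEq V]
    (L S : Finset V) (hLS : Disjoint L S) (hcover : L ∪ S = Finset.univ)
    (hC : Δ < (L.card - 1).choose (t - 1))
    (hdvd : t ∣ L.card * Δ + S.card * δ)
    (H1 : Finset (Finset V))
    (hH1 : ∀ e ∈ H1, e.card = t ∧ (e ∩ S).card = 1 ∧ (e ∩ L).card = t - 1)
    (hdegS : ∀ v ∈ S, hdeg H1 v = δ)
    (har : ∃ k : ℕ, ∀ v ∈ L, (hdeg H1 v = k ∨ hdeg H1 v = k + 1) ∧ hdeg H1 v ≤ Δ) :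
    ∃ H2 : Finset (Finset V),
      (∀ e ∈ H2, e.card = t ∧ e ⊆ L) ∧
      (∃ k : ℕ, ∀ v ∈ L, hdeg H2 v = k ∨ hdeg H2 v = k + 1) ∧
      (∀ v ∈ L, hdeg (H1 ∪ H2) v = Δ) ∧
      (∀ v ∈ S, hdeg (H1 ∪ H2) v = δ) := by
  obtain ⟨k, hk⟩ := har
  set d := fun v => Δ - hdeg H1 v with hddef
  set a := Δ - (k + 1) with hadef
  -- window
  have hwin : ∀ v ∈ L, d v = a ∨ d v = a + 1 := by
    intro v hv
    obtain ⟨hor, hle⟩ := hk v hv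
    rcases hor with h | h
    · rcases le_or_gt (k + 1) Δ with h' | h'
      · right; simp only [hddef, hadef, h]; omega
      · left; simp only [hddef, hadef, h]; omega
    · left; simp only [hddef, hadef, h]
  -- bound
  have hbd : ∀ v ∈ L, d v ≤ (L.card - 1).choose (t - 1) := by
    intro v hv
    simp only [hddef]
    omega
  -- divisibility
  have hsum_univ : ∑ v ∈ Finset.univ, hdeg H1 v = t * H1.card := by
    rw [sum_hdeg H1 Finset.univ (fun e _ => Finset.subset_univ e)]
    rw [Finset.sum_congr rfl (fun e he => (hH1 e he).1), Finset.sum_const, smul_eq_mul]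
    ring
  have hsplit : ∑ v ∈ L, hdeg H1 v + ∑ v ∈ S, hdeg H1 v = t * H1.card := by
    rw [← hsum_univ, ← hcover, Finset.sum_union hLS]
  have hS : ∑ v ∈ S, hdeg H1 v = S.card * δ := by
    rw [Finset.sum_congr rfl hdegS, Finset.sum_const, smul_eq_mul]
  have hLd : ∑ v ∈ L, d v + ∑ v ∈ L, hdeg H1 v = L.card * Δ := by
    rw [← Finset.sum_add_distrib]
    have : ∀ v ∈ L, d v + hdeg H1 v = Δ := by
      intro v hv
      have := (hk v hv).2
      simp only [hddef]
      omega
    rw [Finset.sum_congr rfl this, Finset.sum_const, smul_eq_mul]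
  have hdvdL : t ∣ ∑ v ∈ L, d v := by
    have heq : ∑ v ∈ L, d v = (L.card * Δ + S.card * δ) - t * H1.card := by omega
    rw [heq]
    exact Nat.dvd_sub hdvd (Dvd.intro _ rfl)
  obtain ⟨H2, hE, hD⟩ := core_aux (t + L.card) t L d a le_rfl (by omega) hwin hbd hdvdL
  have hH2S : ∀ e ∈ H2, ∀ v ∈ S, v ∉ e := by
    intro e he v hvS hve
    exact Finset.disjoint_left.mp hLS ((hE e he).2 hve) hvS
  have hdisj : Disjoint H1 H2 := by
    rw [Finset.disjoint_left]
    intro e he1 he2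
    have h1 := (hH1 e he1).2.1
    have : (e ∩ S).Nonempty := Finset.card_pos.mp (by omega)
    obtain ⟨x, hx⟩ := this
    rw [Finset.mem_inter] at hx
    exact hH2S e he2 x hx.2 hx.1
  refine ⟨H2, hE, ⟨a, fun v hv => by rw [hD v hv]; exact hwin v hv⟩, ?_, ?_⟩
  · intro v hv
    rw [hdeg_union _ _ hdisj, hD v hv]
    have := (hk v hv).2
    simp only [hddef]
    omega
  · intro v hv
    rw [hdeg_union _ _ hdisj, hdegS v hv, hdeg_zero H2 v (fun e he => hH2S e he v hv)]
    omega
end
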